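/- arXiv:1204.0301 — 2 statements merged into one kernel-verified Lean document; each statement's English description precedes it below -/
import Mathlib

section
/- In any finite set of closed bounded intervals on the real line whose union J has total length (Lebesgue measure) s, there exists a subset of pairwise disjoint intervals whose union has total length at least s/2. -/
/-!
Pass to a subfamily with the same union in which no interval is covered by the others. In such
a family the interval `K` with the largest left endpoint meets at most one other member: every
member meeting `K` contains `K.1`, and of three intervals through a common point one always lies
in the union of the other two. Adding intervals in order of left endpoint therefore 2-colours the
family so that equally coloured intervals are disjoint, and one colour class carries at least half
of the measure of the union.
-/

open MeasureTheory Set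

section LinearOrder

variable {α : Type*} [LinearOrder α]

theorem Icc_subset_Icc_union_Icc_of_mem {a b c d e f x : α} (hab : x ∈ Icc a b)
    (hcd : x ∈ Icc c d) (hae : a ≤ e) (hfd : f ≤ d) : Icc e f ⊆ Icc a b ∪ Icc c d :=
  (Icc_subset_Icc hae hfd).trans <| Icc_subset_Icc_union_Icc.trans <|
    union_subset_union (Icc_subset_Icc_right hab.2) (Icc_subset_Icc_left hcd.1)

theorem Icc_subset_union_or_Icc_subset_union_of_mem {x : α} {p q r : α × α}
    (hp : x ∈ Icc p.1 p.2) (hq : x ∈ Icc q.1 q.2) (hr : x ∈ Icc r.1 r.2)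
    (hpr : p.2 ≤ r.2) (hqr : q.2 ≤ r.2) :
    Icc p.1 p.2 ⊆ Icc q.1 q.2 ∪ Icc r.1 r.2 ∨ Icc q.1 q.2 ⊆ Icc p.1 p.2 ∪ Icc r.1 r.2 := by
  rcases le_total q.1 p.1 with h | h
  · exact .inl (Icc_subset_Icc_union_Icc_of_mem hq hr h hpr)
  · exact .inr (Icc_subset_Icc_union_Icc_of_mem hp hr h hqr)

theorem left_mem_Icc_of_not_disjoint {p K : α × α} (hpK : p.1 ≤ K.1)
    (h : ¬Disjoint (Icc p.1 p.2) (Icc K.1 K.2)) : K.1 ∈ Icc p.1 p.2 ∧ K.1 ∈ Icc K.1 K.2 := by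
  obtain ⟨x, hxp, hxK⟩ := not_disjoint_iff.1 h
  exact ⟨⟨hpK, hxK.1.trans hxp.2⟩, ⟨le_rfl, hxK.1.trans hxK.2⟩⟩

def IccIrredundant (t : Finset (α × α)) : Prop :=
  ∀ p ∈ t, ¬Icc p.1 p.2 ⊆ ⋃ q ∈ t.erase p, Icc q.1 q.2

def IsIccColoring (c : α × α → Bool) (t : Finset (α × α)) : Prop :=
  ∀ p ∈ t, ∀ q ∈ t, p ≠ q → c p = c q → Disjoint (Icc p.1 p.2) (Icc q.1 q.2)

theorem IsIccColoring.update_insert [DecidableEq (α × α)] {c : α × α → Bool} {t : Finset (α × α)}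
    {K : α × α} {k : Bool} (hc : IsIccColoring c t) (hKt : K ∉ t)
    (hk : ∀ q ∈ t, c q = k → Disjoint (Icc q.1 q.2) (Icc K.1 K.2)) :
    IsIccColoring (Function.update c K k) (insert K t) := by
  intro p hp q hq hpq hcol
  rcases Finset.mem_insert.1 hp with rfl | hpt <;> rcases Finset.mem_insert.1 hq with rfl | hqt
  · exact absurd rfl hpq
  · rw [Function.update_self, Function.update_of_ne hpq.symm] at hcol
    exact (hk q hqt hcol.symm).symm
  · rw [Function.update_self, Function.update_of_ne hpq] at hcol
    exact hk p hpt hcol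
  · rw [Function.update_of_ne (ne_of_mem_of_not_mem hpt hKt),
      Function.update_of_ne (ne_of_mem_of_not_mem hqt hKt)] at hcol
    exact hc p hpt q hqt hpq hcol

theorem IsIccColoring.pairwise_disjoint_filter {c : α × α → Bool} {t : Finset (α × α)}
    (hc : IsIccColoring c t) (b : Bool) :
    ∀ p ∈ t.filter (c · = b), ∀ q ∈ t.filter (c · = b), p ≠ q →
      Disjoint (Icc p.1 p.2) (Icc q.1 q.2) := by
  intro p hp q hq hpq
  obtain ⟨hpt, rfl⟩ := Finset.mem_filter.1 hp
  obtain ⟨hqt, hcq⟩ := Finset.mem_filter.1 hq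
  exact hc p hpt q hqt hpq hcq.symm

namespace IccIrredundant

variable {t : Finset (α × α)}

theorem mono {t' : Finset (α × α)} (h : IccIrredundant t) (ht' : t' ⊆ t) : IccIrredundant t' :=
  fun p hp hcov => h p (ht' hp) <| hcov.trans <|
    biUnion_subset_biUnion_left (Finset.coe_subset.2 (Finset.erase_subset_erase p ht'))

theorem not_subset_union (h : IccIrredundant t) {p q r : α × α} (hp : p ∈ t) (hq : q ∈ t)
    (hr : r ∈ t) (hpq : p ≠ q) (hpr : p ≠ r) : ¬Icc p.1 p.2 ⊆ Icc q.1 q.2 ∪ Icc r.1 r.2 :=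
  fun hsub => h p hp <| hsub.trans <| union_subset
    (subset_biUnion_of_mem (u := fun q : α × α => Icc q.1 q.2)
      (Finset.mem_erase.2 ⟨hpq.symm, hq⟩))
    (subset_biUnion_of_mem (u := fun q : α × α => Icc q.1 q.2)
      (Finset.mem_erase.2 ⟨hpr.symm, hr⟩))

theorem eq_of_not_disjoint (h : IccIrredundant t) {K p q : α × α} (hK : K ∈ t)
    (hmax : ∀ x ∈ t, x.1 ≤ K.1) (hp : p ∈ t) (hq : q ∈ t) (hpK : p ≠ K) (hqK : q ≠ K)
    (hpmeet : ¬Disjoint (Icc p.1 p.2) (Icc K.1 K.2))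
    (hqmeet : ¬Disjoint (Icc q.1 q.2) (Icc K.1 K.2)) : p = q := by
  by_contra hpq
  obtain ⟨hKp, hKK⟩ := left_mem_Icc_of_not_disjoint (hmax p hp) hpmeet
  obtain ⟨hKq, -⟩ := left_mem_Icc_of_not_disjoint (hmax q hq) hqmeet
  rcases le_total K.2 p.2 with hp2 | hp2
  · exact h.not_subset_union hK hp hq hpK.symm hqK.symm
      (subset_union_of_subset_left (Icc_subset_Icc hKp.1 hp2) _)
  rcases le_total K.2 q.2 with hq2 | hq2
  · exact h.not_subset_union hK hq hp hqK.symm hpK.symm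
      (subset_union_of_subset_left (Icc_subset_Icc hKq.1 hq2) _)
  rcases Icc_subset_union_or_Icc_subset_union_of_mem hKp hKq hKK hp2 hq2 with hsub | hsub
  · exact h.not_subset_union hp hq hK hpq hpK hsub
  · exact h.not_subset_union hq hp hK (Ne.symm hpq) hqK hsub

theorem exists_isIccColoring (h : IccIrredundant t) : ∃ c, IsIccColoring c t := by
  classical
  induction t using Finset.induction_on_max_value (fun p : α × α => p.1) with
  | empty => exact ⟨fun _ => true, by simp [IsIccColoring]⟩
  | insert K t hKt hmax ih =>
    have hK : K ∈ insert K t := Finset.mem_insert_self K t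
    have hmax' : ∀ x ∈ insert K t, x.1 ≤ K.1 :=
      Finset.forall_mem_insert _ _ _ |>.2 ⟨le_rfl, hmax⟩
    obtain ⟨c, hc⟩ := ih (h.mono (Finset.subset_insert K t))
    by_cases hmeet : ∃ p ∈ t, ¬Disjoint (Icc p.1 p.2) (Icc K.1 K.2)
    · obtain ⟨p, hp, hpK⟩ := hmeet
      refine ⟨_, hc.update_insert hKt (k := !c p) fun q hq hcq => by_contra fun hqK => ?_⟩
      have hqp : q = p := h.eq_of_not_disjoint hK hmax' (Finset.mem_insert_of_mem hq)
        (Finset.mem_insert_of_mem hp) (ne_of_mem_of_not_mem hq hKt)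
        (ne_of_mem_of_not_mem hp hKt) hqK hpK
      simp [hqp] at hcq
    · push Not at hmeet
      exact ⟨_, hc.update_insert hKt (k := true) fun q hq _ => hmeet q hq⟩

end IccIrredundant

theorem exists_iccIrredundant_subset (s : Finset (α × α)) :
    ∃ t ⊆ s, (⋃ p ∈ t, Icc p.1 p.2) = (⋃ p ∈ s, Icc p.1 p.2) ∧ IccIrredundant t := by
  classical
  obtain ⟨t, ht, hmin⟩ :=
    (s.powerset.filter fun t => (⋃ p ∈ t, Icc p.1 p.2) = ⋃ p ∈ s, Icc p.1 p.2).exists_min_image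
      Finset.card ⟨s, by simp⟩
  obtain ⟨hts, htU⟩ := Finset.mem_filter.1 ht
  refine ⟨t, Finset.mem_powerset.1 hts, htU, fun p hp hcov => ?_⟩
  have hU : (⋃ q ∈ t.erase p, Icc q.1 q.2) = ⋃ q ∈ s, Icc q.1 q.2 := by
    rw [← htU, ← union_eq_right.2 hcov, ← Finset.set_biUnion_insert p _ fun q => Icc q.1 q.2,
      Finset.insert_erase hp]
  have := hmin (t.erase p) (Finset.mem_filter.2
    ⟨Finset.mem_powerset.2 ((Finset.erase_subset p t).trans (Finset.mem_powerset.1 hts)), hU⟩)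
  exact (Finset.card_erase_lt_of_mem hp).not_ge this

end LinearOrder

theorem measure_le_two_mul_or_of_subset_union {X : Type*} [MeasurableSpace X] {μ : Measure X}
    {s t u : Set X} (h : s ⊆ t ∪ u) : μ s ≤ 2 * μ t ∨ μ s ≤ 2 * μ u := by
  have hsum := (measure_mono (μ := μ) h).trans (measure_union_le t u)
  rcases le_total (μ t) (μ u) with htu | hut
  · exact .inr (hsum.trans (two_mul (μ u) ▸ add_le_add_left htu _))
  · exact .inl (hsum.trans (two_mul (μ t) ▸ add_le_add_right hut _))

theorem stmt7_general (s : Finset (ℝ × ℝ)) :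
    ∃ t ⊆ s,
      (∀ p ∈ t, ∀ q ∈ t, p ≠ q → Disjoint (Set.Icc p.1 p.2) (Set.Icc q.1 q.2)) ∧
      volume (⋃ p ∈ s, Set.Icc p.1 p.2) ≤ 2 * volume (⋃ p ∈ t, Set.Icc p.1 p.2) := by
  obtain ⟨t, hts, htU, hirr⟩ := exists_iccIrredundant_subset s
  obtain ⟨c, hc⟩ := hirr.exists_isIccColoring
  let colorClass (b : Bool) : Finset (ℝ × ℝ) := t.filter (c · = b)
  have hclasses : colorClass true ∪ colorClass false = t := by
    ext p
    simp only [colorClass, Finset.mem_union, Finset.mem_filter, ← and_or_left,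
      Bool.eq_false_or_eq_true, and_true]
  have hcover : (⋃ p ∈ s, Icc p.1 p.2) ⊆
      (⋃ p ∈ colorClass true, Icc p.1 p.2) ∪ ⋃ p ∈ colorClass false, Icc p.1 p.2 := by
    rw [← htU, ← Finset.set_biUnion_union, hclasses]
  rcases measure_le_two_mul_or_of_subset_union hcover with h | h
  · exact ⟨_, (Finset.filter_subset _ _).trans hts, hc.pairwise_disjoint_filter true, h⟩
  · exact ⟨_, (Finset.filter_subset _ _).trans hts, hc.pairwise_disjoint_filter false, h⟩

/-- Schulman's interval lemma: in any finite set of closed bounded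
intervals on ℝ there is a subset of pairwise disjoint intervals whose union has
Lebesgue measure at least half that of the union of all the intervals. -/
theorem stmt7 (s : Finset (ℝ × ℝ)) (hs : ∀ p ∈ s, p.1 ≤ p.2) :
    ∃ t ⊆ s,
      (∀ p ∈ t, ∀ q ∈ t, p ≠ q → Disjoint (Set.Icc p.1 p.2) (Set.Icc q.1 q.2)) ∧
      volume (⋃ p ∈ s, Set.Icc p.1 p.2) ≤ 2 * volume (⋃ p ∈ t, Set.Icc p.1 p.2) :=
  stmt7_general s
end

section
/- Consider the state evolution n_{vu}(t+1) = n_{vu}(t) + X^{vu}_{t+1}·[n_u(t) > n_{vu}(t)] with n_v(t) = 1 + min_{u ∈ N_v} n_{vu}(t) on a graph, where X^{vu}_t ∈ {0,1} and initial values n_{vu}(0) = 0. Then for all adjacent nodes u, v and all times t, |n_u(t) − n_v(t)| ≤ 1. -/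
/-!
Write `nf u` for the iteration count `n_u`. The link counter `n v u` only moves towards `nf u`,
by at most one step at a time, and `nf u` never decreases; so `n v u t ≤ nf u t` holds forever.
Since `nf v = 1 + min_u n v u`, this gives `nf v t ≤ 1 + n v u t ≤ 1 + nf u t` for every
neighbour `u`, and symmetrically.
-/

open Finset

theorem le_of_step_toward_monotone {a b x : ℕ → ℕ} (hb : Monotone b) (hx : ∀ t, x t ≤ 1)
    (h0 : a 0 ≤ b 0) (hstep : ∀ t, a (t + 1) = a t + x (t + 1) * if a t < b t then 1 else 0) :
    ∀ t, a t ≤ b t := by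
  intro t
  induction t with
  | zero => exact h0
  | succ t ih =>
    have hbt : b t ≤ b (t + 1) := hb (Nat.le_add_right t 1)
    rw [hstep t]
    split_ifs with hlt
    · have := hx (t + 1)
      omega
    · omega

section ErasureDynamics

variable {V : Type*} {G : SimpleGraph V} {X n : V → V → ℕ → ℕ} {nf : V → ℕ → ℕ}

theorem monotone_latest_of_adj
    (hrec : ∀ v u t, G.Adj v u →
      n v u (t + 1) = n v u t + X v u (t + 1) * (if n v u t < nf u t then 1 else 0))
    {v u : V} (hadj : G.Adj v u) : Monotone (n v u) :=
  monotone_nat_of_le_succ fun t => (hrec v u t hadj).symm ▸ Nat.le_add_right _ _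

variable [Fintype V] [DecidableRel G.Adj] {hnb : ∀ v : V, (G.neighborFinset v).Nonempty}

theorem monotone_iterCount
    (hnf : ∀ v t, nf v t = 1 + (G.neighborFinset v).inf' (hnb v) (fun u => n v u t))
    (hrec : ∀ v u t, G.Adj v u →
      n v u (t + 1) = n v u t + X v u (t + 1) * (if n v u t < nf u t then 1 else 0))
    (v : V) : Monotone (nf v) := by
  intro s t hst
  rw [hnf, hnf]
  refine Nat.add_le_add_left (le_inf' _ _ fun u hu => (inf'_le _ hu).trans ?_) 1
  exact monotone_latest_of_adj hrec ((G.mem_neighborFinset v u).1 hu) hst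

theorem latest_le_iterCount (hX01 : ∀ v u t, X v u t ≤ 1)
    (hnf : ∀ v t, nf v t = 1 + (G.neighborFinset v).inf' (hnb v) (fun u => n v u t))
    (hinit : ∀ v u, n v u 0 = 0)
    (hrec : ∀ v u t, G.Adj v u →
      n v u (t + 1) = n v u t + X v u (t + 1) * (if n v u t < nf u t then 1 else 0))
    {v u : V} (hadj : G.Adj v u) (t : ℕ) : n v u t ≤ nf u t :=
  le_of_step_toward_monotone (monotone_iterCount hnf hrec u) (hX01 v u)
    ((hinit v u).trans_le (Nat.zero_le _)) (fun t => hrec v u t hadj) t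

theorem iterCount_le_succ_latest
    (hnf : ∀ v t, nf v t = 1 + (G.neighborFinset v).inf' (hnb v) (fun u => n v u t))
    {v u : V} (hadj : G.Adj v u) (t : ℕ) : nf v t ≤ 1 + n v u t := by
  rw [hnf]
  exact Nat.add_le_add_left (inf'_le _ ((G.mem_neighborFinset v u).2 hadj)) 1

end ErasureDynamics

theorem stmt15_general {V : Type*} [Fintype V]
    (G : SimpleGraph V) [DecidableRel G.Adj]
    (hnb : ∀ v : V, (G.neighborFinset v).Nonempty)
    (X : V → V → ℕ → ℕ)
    (hX01 : ∀ v u t, X v u t ≤ 1)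
    (n : V → V → ℕ → ℕ) (nf : V → ℕ → ℕ)
    (hnf : ∀ v t, nf v t = 1 + (G.neighborFinset v).inf' (hnb v) (fun u => n v u t))
    (hinit : ∀ v u, n v u 0 = 0)
    (hrec : ∀ v u t, G.Adj v u →
      n v u (t + 1) = n v u t + X v u (t + 1) * (if n v u t < nf u t then 1 else 0)) :
    ∀ u v, G.Adj u v → ∀ t, |(nf u t : ℤ) - (nf v t : ℤ)| ≤ 1 := by
  intro u v hadj t
  have huv : nf u t ≤ 1 + nf v t :=
    (iterCount_le_succ_latest hnf hadj t).trans
      (Nat.add_le_add_left (latest_le_iterCount hX01 hnf hinit hrec hadj t) 1)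
  have hvu : nf v t ≤ 1 + nf u t :=
    (iterCount_le_succ_latest hnf hadj.symm t).trans
      (Nat.add_le_add_left (latest_le_iterCount hX01 hnf hinit hrec hadj.symm t) 1)
  rw [abs_le]
  omega

/-- under the state evolution
`n_{vu}(t+1) = n_{vu}(t) + X^{vu}_{t+1}·[n_u(t) > n_{vu}(t)]` with
`n_v(t) = 1 + min_{u ∈ N_v} n_{vu}(t)`, `n_{vu}(0) = 0`, and symmetric 0/1
erasures `X`, neighboring nodes' iteration counts differ by at most 1. -/
theorem stmt15 {V : Type*} [Fintype V] [DecidableEq V]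
    (G : SimpleGraph V) [DecidableRel G.Adj]
    (hnb : ∀ v : V, (G.neighborFinset v).Nonempty)
    (X : V → V → ℕ → ℕ)
    (hX01 : ∀ v u t, X v u t ≤ 1)
    (hXsym : ∀ v u t, X v u t = X u v t)
    (n : V → V → ℕ → ℕ) (nf : V → ℕ → ℕ)
    (hnf : ∀ v t, nf v t = 1 + (G.neighborFinset v).inf' (hnb v) (fun u => n v u t))
    (hinit : ∀ v u, n v u 0 = 0)
    (hrec : ∀ v u t, G.Adj v u →
      n v u (t + 1) = n v u t + X v u (t + 1) * (if n v u t < nf u t then 1 else 0)) :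
    ∀ u v, G.Adj u v → ∀ t, |(nf u t : ℤ) - (nf v t : ℤ)| ≤ 1 :=
  stmt15_general G hnb X hX01 n nf hnf hinit hrec
end
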